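/- arXiv:2312.02306 — 3 statements merged into one kernel-verified Lean document; each statement's English description precedes it below -/
import Mathlib

section
/- The map F_S(x) = A·x·(1−p)·e^{AT} / (x·(e^{AT}−1) + A), defined for x ≥ 0 with A > 0, T > 0, and 0 ≤ p ≤ 1, has exactly two fixed points: x₁* = A·(1 − p·e^{AT}/(e^{AT}−1)) and x₂* = 0. Moreover x₁* > 0 if and only if p < 1 − e^{−AT}. -/
open Real

/-! Writing `E = e^{AT} > 1`, clearing the positive denominator turns `F x = x` into
`x · (x (E - 1) - A (E - 1 - p E)) = 0`, and the sign of the nonzero root is that of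
`E - 1 - p E`, i.e. of `1 - 1/E - p`. -/

section

variable {A E p x : ℝ}

theorem logistic_map_eq_self_iff (hE : E ≠ 1) (hden : x * (E - 1) + A ≠ 0) :
    A * x * (1 - p) * E / (x * (E - 1) + A) = x ↔ x = A * (1 - p * E / (E - 1)) ∨ x = 0 := by
  have hE' : E - 1 ≠ 0 := sub_ne_zero.mpr hE
  rw [div_eq_iff hden]
  constructor
  · intro h
    have hfactor : (x - A * (1 - p * E / (E - 1))) * x = 0 := by
      field_simp
      linear_combination -h
    rcases mul_eq_zero.mp hfactor with hroot | hzero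
    · exact .inl (sub_eq_zero.mp hroot)
    · exact .inr hzero
  · rintro (rfl | rfl)
    · field_simp
      ring
    · ring

theorem mul_one_sub_div_pos_iff (hA : 0 < A) (hE : 1 < E) :
    0 < A * (1 - p * E / (E - 1)) ↔ p < 1 - E⁻¹ := by
  have hE0 : 0 < E := zero_lt_one.trans hE
  rw [mul_pos_iff_of_pos_left hA, sub_pos, div_lt_one (sub_pos.mpr hE),
    ← lt_div_iff₀ hE0, sub_div, div_self hE0.ne', one_div]

end

theorem stmt_0_general (A T p : ℝ) (hA : 0 < A) (hT : 0 < T)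
    (F : ℝ → ℝ)
    (hF : ∀ x : ℝ, 0 ≤ x → F x = A * x * (1 - p) * exp (A * T) / (x * (exp (A * T) - 1) + A)) :
    (∀ x : ℝ, 0 ≤ x →
      (F x = x ↔ x = A * (1 - p * exp (A * T) / (exp (A * T) - 1)) ∨ x = 0)) ∧
    (0 < A * (1 - p * exp (A * T) / (exp (A * T) - 1)) ↔ p < 1 - exp (-(A * T))) := by
  have hE : 1 < exp (A * T) := one_lt_exp_iff.mpr (mul_pos hA hT)
  refine ⟨fun x hx => ?_, ?_⟩
  · have hden : 0 < x * (exp (A * T) - 1) + A := by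
      have := mul_nonneg hx (sub_pos.mpr hE).le
      linarith
    rw [hF x hx]
    exact logistic_map_eq_self_iff hE.ne' hden.ne'
  · rw [exp_neg]
    exact mul_one_sub_div_pos_iff hA hE

theorem stmt_0 (A T p : ℝ) (hA : 0 < A) (hT : 0 < T) (hp0 : 0 ≤ p) (hp1 : p ≤ 1)
    (F : ℝ → ℝ)
    (hF : ∀ x : ℝ, 0 ≤ x → F x = A * x * (1 - p) * exp (A * T) / (x * (exp (A * T) - 1) + A)) :
    (∀ x : ℝ, 0 ≤ x →
      (F x = x ↔ x = A * (1 - p * exp (A * T) / (exp (A * T) - 1)) ∨ x = 0)) ∧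
    (0 < A * (1 - p * exp (A * T) / (exp (A * T) - 1)) ↔ p < 1 - exp (-(A * T))) :=
  stmt_0_general A T p hA hT F hF
end

section
/- Let x : [T†, ∞) → ℝ be differentiable with x'(t) ≤ −𝓢(t)·(e^{x(t)} − 1), where 𝓢 : [T†,∞) → ℝ is continuous with ∫_{T†}^{t} 𝓢(τ) dτ → +∞ as t → ∞, and suppose e^{x(t)} − 1 keeps a constant sign. Then x(t) ≤ −ln(1 − h(t)) for all t > T†, where h(t) = (e^{x(T†)} − 1)·exp(−(x(T†) + ∫_{T†}^{t} 𝓢(τ) dτ)), and h(t) → 0 as t → ∞. -/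
open Real MeasureTheory Filter

theorem stmt_15 (Td : ℝ) (𝓢 x x' : ℝ → ℝ)
    (h𝓢cont : Continuous 𝓢) (h𝓢nonneg : ∀ t, 0 ≤ 𝓢 t)
    (hdiv : Tendsto (fun t => ∫ τ in Td..t, 𝓢 τ) atTop atTop)
    (hx : ∀ t, Td ≤ t → HasDerivAt x (x' t) t)
    (hineq : ∀ t, Td ≤ t → x' t ≤ -𝓢 t * (exp (x t) - 1))
    (hsign : (∀ t, Td ≤ t → 0 < exp (x t) - 1) ∨ (∀ t, Td ≤ t → exp (x t) - 1 < 0)) :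
    (∀ t, Td < t →
        x t ≤ -Real.log (1 - (exp (x Td) - 1) * exp (-(x Td + ∫ τ in Td..t, 𝓢 τ)))) ∧
    Tendsto (fun t => (exp (x Td) - 1) * exp (-(x Td + ∫ τ in Td..t, 𝓢 τ)))
      atTop (nhds 0) := by
  set I : ℝ → ℝ := fun t => ∫ τ in Td..t, 𝓢 τ with hIdef
  have hI : ∀ t : ℝ, HasDerivAt I (𝓢 t) t := fun t =>
    (h𝓢cont.integral_hasStrictDerivAt Td t).hasDerivAt
  set v : ℝ → ℝ := fun t => (1 - exp (-(x t))) * exp (I t) with hvdef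
  have hv : ∀ t, Td ≤ t → HasDerivAt v
      (exp (-(x t)) * x' t * exp (I t) + (1 - exp (-(x t))) * (exp (I t) * 𝓢 t)) t := by
    intro t ht
    have hu : HasDerivAt (fun s => 1 - exp (-(x s))) (exp (-(x t)) * x' t) t := by
      have h1 : HasDerivAt (fun s => exp (-(x s))) (exp (-(x t)) * -(x' t)) t :=
        ((hx t ht).neg).exp
      have := h1.const_sub 1
      rw [show exp (-(x t)) * x' t = -(exp (-(x t)) * -(x' t)) by ring]; exact this
    exact hu.mul (hI t).exp
  have hanti : AntitoneOn v (Set.Ici Td) := by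
    apply antitoneOn_of_deriv_nonpos (convex_Ici Td)
    · intro t ht
      exact ((hv t ht).continuousAt).continuousWithinAt
    · intro t ht
      rw [interior_Ici] at ht
      exact (hv t (le_of_lt ht)).differentiableAt.differentiableWithinAt
    · intro t ht
      rw [interior_Ici] at ht
      have ht' : Td ≤ t := le_of_lt ht
      rw [(hv t ht').deriv]
      have hE : (0:ℝ) < exp (I t) := exp_pos _
      have ha : (0:ℝ) < exp (-(x t)) := exp_pos _
      have hab : exp (-(x t)) * exp (x t) = 1 := by
        rw [← Real.exp_add]; simp
      have hkey : exp (-(x t)) * x' t + (1 - exp (-(x t))) * 𝓢 t ≤ 0 := by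
        have h2 := mul_le_mul_of_nonneg_left (hineq t ht') (le_of_lt ha)
        nlinarith [h𝓢nonneg t]
      nlinarith
  have hInonneg : ∀ t, Td ≤ t → 0 ≤ I t := fun t ht =>
    intervalIntegral.integral_nonneg ht (fun τ _ => h𝓢nonneg τ)
  have hITd : I Td = 0 := intervalIntegral.integral_same
  have hrw : ∀ t, (exp (x Td) - 1) * exp (-(x Td + I t)) = (1 - exp (-(x Td))) * exp (-(I t)) := by
    intro t
    rw [neg_add, Real.exp_add]
    have : (exp (x Td) - 1) * exp (-(x Td)) = 1 - exp (-(x Td)) := by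
      have : exp (x Td) * exp (-(x Td)) = 1 := by rw [← Real.exp_add]; simp
      nlinarith
    rw [← mul_assoc, this]
  constructor
  · intro t ht
    have ht' : Td ≤ t := le_of_lt ht
    have hvle : v t ≤ v Td := hanti Set.self_mem_Ici ht' ht'
    have hEt : (0:ℝ) < exp (I t) := exp_pos _
    -- h t = (1 - exp(-(x Td))) * exp (-(I t))
    have hh : (exp (x Td) - 1) * exp (-(x Td + I t)) = (1 - exp (-(x Td))) * exp (-(I t)) :=
      hrw t
    set h := (exp (x Td) - 1) * exp (-(x Td + I t)) with hhdef
    have hu_le : 1 - exp (-(x t)) ≤ h := by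
      rw [hh]
      have : (1 - exp (-(x t))) * exp (I t) ≤ (1 - exp (-(x Td))) := by
        have := hvle
        simp only [hvdef, hITd, Real.exp_zero, mul_one] at this
        exact this
      have hEinv : exp (-(I t)) = (exp (I t))⁻¹ := by
        rw [Real.exp_neg]
      rw [hEinv, ← div_eq_mul_inv, le_div_iff₀ hEt]
      exact this
    have hlt1 : h < 1 := by
      rw [hh]
      have h1 : 1 - exp (-(x Td)) < 1 := by nlinarith [exp_pos (-(x Td))]
      have h2 : exp (-(I t)) ≤ 1 := by
        rw [Real.exp_le_one_iff]
        simp [hInonneg t ht']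
      nlinarith [exp_pos (-(I t))]
    have hpos : 0 < 1 - h := by linarith
    have hle : 1 - h ≤ exp (-(x t)) := by linarith
    have := Real.log_le_log hpos hle
    rw [Real.log_exp] at this
    linarith
  · have h1 : Tendsto (fun t => -(x Td + I t)) atTop atBot := by
      apply tendsto_neg_atBot_iff.mpr
      exact tendsto_atTop_add_const_left _ _ hdiv
    have h2 : Tendsto (fun t => exp (-(x Td + I t))) atTop (nhds 0) :=
      Real.tendsto_exp_atBot.comp h1
    have := h2.const_mul (exp (x Td) - 1)
    simpa using this
end

section
/- Seasonal threshold: with β_γ(t) = β₀·(1 + γ·Ψ(ωt)), γ ≥ 0, β₀, σ+g, T > 0, S_c = (σ+g)/β₀, and ∫₀ᵀ 𝓢(t) dt = ln(1−p) + AT, the Floquet condition exp(∫₀ᵀ β_γ(t)·𝓢(t) dt − (σ+g)T) < 1 holds if and only if p > 1 − exp(−[(A − S_c)·T + γ·∫₀ᵀ Ψ(ωt)·𝓢(t) dt]). -/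
/-! Splitting off the `γ`-part of the integral and substituting `∫₀ᵀ 𝓢 = ln(1 - p) + A T` factors
the Floquet exponent as `β₀ (ln(1 - p) + E)`, with `E` the bracket in the threshold; as `β₀ > 0`
it is negative exactly when `1 - p < exp(-E)`. -/

open Real MeasureTheory

lemma intervalIntegral_const_mul_one_add_mul {f g : ℝ → ℝ} {a b : ℝ}
    (hg : IntervalIntegrable g volume a b) (hfg : IntervalIntegrable (fun t => f t * g t) volume a b)
    (c γ : ℝ) :
    ∫ t in a..b, c * (1 + γ * f t) * g t =
      (c * ∫ t in a..b, g t) + c * γ * ∫ t in a..b, f t * g t := by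
  have hsplit : ∀ t, c * (1 + γ * f t) * g t = c * g t + c * γ * (f t * g t) := fun t => by ring
  simp_rw [hsplit]
  rw [intervalIntegral.integral_add (hg.const_mul c) (hfg.const_mul (c * γ)),
    intervalIntegral.integral_const_mul, intervalIntegral.integral_const_mul]

lemma exp_mul_log_one_sub_add_lt_one_iff {β p x : ℝ} (hβ : 0 < β) (hp : p < 1) :
    exp (β * (log (1 - p) + x)) < 1 ↔ 1 - exp (-x) < p := by
  rw [exp_lt_one_iff, mul_neg_iff]
  simp only [hβ, hβ.not_gt, true_and, false_and, or_false]
  rw [← lt_neg_iff_add_neg', lt_neg, log_lt_iff_lt_exp (by linarith)]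
  constructor <;> intro h <;> linarith

theorem stmt_18_general (A β₀ σ g T ω γ p : ℝ) (hβ : 0 < β₀)
    (hp1 : p < 1)
    (Ψ 𝓢 : ℝ → ℝ) (hΨcont : Continuous Ψ)
    (h𝓢cont : Continuous 𝓢)
    (h𝓢int : ∫ t in (0:ℝ)..T, 𝓢 t = Real.log (1 - p) + A * T) :
    exp ((∫ t in (0:ℝ)..T, β₀ * (1 + γ * Ψ (ω * t)) * 𝓢 t) - (σ + g) * T) < 1 ↔
      p > 1 - exp (-((A - (σ + g) / β₀) * T + γ * ∫ t in (0:ℝ)..T, Ψ (ω * t) * 𝓢 t)) := by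
  set I := ∫ t in (0:ℝ)..T, Ψ (ω * t) * 𝓢 t
  have hΨ𝓢 : Continuous fun t => Ψ (ω * t) * 𝓢 t := by fun_prop
  have hexponent : (∫ t in (0:ℝ)..T, β₀ * (1 + γ * Ψ (ω * t)) * 𝓢 t) - (σ + g) * T
      = β₀ * (log (1 - p) + ((A - (σ + g) / β₀) * T + γ * I)) := by
    rw [intervalIntegral_const_mul_one_add_mul (h𝓢cont.intervalIntegrable 0 T)
      (hΨ𝓢.intervalIntegrable 0 T), h𝓢int]
    field_simp
    ring
  rw [hexponent, exp_mul_log_one_sub_add_lt_one_iff hβ hp1, gt_iff_lt]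

theorem stmt_18 (A β₀ σ g T ω γ p : ℝ) (hA : 0 < A) (hβ : 0 < β₀) (hσ : 0 ≤ σ)
    (hg : 0 ≤ g) (hσg : 0 < σ + g) (hT : 0 < T) (hω : 0 < ω) (hγ : 0 ≤ γ)
    (hp0 : 0 < p) (hp1 : p < 1) (hAc : A > (σ + g) / β₀)
    (Ψ 𝓢 : ℝ → ℝ) (hΨcont : Continuous Ψ) (hΨnonneg : ∀ t, 0 ≤ Ψ t)
    (h𝓢cont : Continuous 𝓢)
    (h𝓢int : ∫ t in (0:ℝ)..T, 𝓢 t = Real.log (1 - p) + A * T) :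
    exp ((∫ t in (0:ℝ)..T, β₀ * (1 + γ * Ψ (ω * t)) * 𝓢 t) - (σ + g) * T) < 1 ↔
      p > 1 - exp (-((A - (σ + g) / β₀) * T + γ * ∫ t in (0:ℝ)..T, Ψ (ω * t) * 𝓢 t)) :=
  stmt_18_general A β₀ σ g T ω γ p hβ hp1 Ψ 𝓢 hΨcont h𝓢cont h𝓢int
end
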